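/- arXiv:1504.03408 — 5 statements merged into one kernel-verified Lean document; each statement's English description precedes it below -/
import Mathlib

section
/- For every n ≥ 1 and every symmetric polynomial f in n variables over ℂ (i.e., f ∈ ℂ[x_1,…,x_n] invariant under all permutations of the variables), the element f(J_1,…,J_n) obtained by substituting the Jucys–Murphy elements for the variables (well defined since the J_b pairwise commute) lies in the center of the group algebra ℂ[S_n]. -/
/-!
The adjacent transpositions `s = (i i+1)` generate `S_n`, so it suffices that each of them commutes
with `f(J_1, …, J_n)`. From `s J_i = J_{i+1} s - 1`, `s J_{i+1} = J_i s + 1` and `s J_b = J_b s` for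
`b ≠ i, i+1`, the transposition `s` commutes with `J_i + J_{i+1}`, with `J_i J_{i+1}` and with the
other `J_b`. Inside the commutative algebra generated by the `J_b`, the elements commuting with `s`
form a subalgebra, and a polynomial invariant under `x_i ↔ x_{i+1}` evaluates into every subalgebra
containing `x_i + x_{i+1}`, `x_i x_{i+1}` and the other variables: averaging over the swap reduces
this to `x^a y^b + x^b y^a`, which lies in `ℤ[x + y, x y]` by Newton's identity.
-/

/-- The Jucys–Murphy element `J_b = Σ_{a < b} (a b)` in the group algebra `ℂ[S_n]`. -/
noncomputable def JM (n : ℕ) (b : Fin n) : MonoidAlgebra ℂ (Equiv.Perm (Fin n)) :=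
  ∑ a ∈ Finset.univ.filter (· < b), MonoidAlgebra.of ℂ (Equiv.Perm (Fin n)) (Equiv.swap a b)

/-- Evaluation of a multivariate polynomial `f ∈ ℂ[x_1,…,x_n]` at the Jucys–Murphy elements,
each monomial being evaluated as the ordered product `J_1^{e_1} J_2^{e_2} ⋯ J_n^{e_n}`
(since the Jucys–Murphy elements pairwise commute, this agrees with any other ordering). -/
noncomputable def evalJM (n : ℕ) (f : MvPolynomial (Fin n) ℂ) :
    MonoidAlgebra ℂ (Equiv.Perm (Fin n)) :=
  ∑ s ∈ f.support, f.coeff s • (List.ofFn fun b : Fin n => JM n b ^ s b).prod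

open Equiv Finset MvPolynomial MonoidAlgebra

section SubringClass

variable {A S : Type*} [CommRing A] [SetLike S A] [SubringClass S A] {s : S} {x y : A}

theorem pow_add_pow_mem (hadd : x + y ∈ s) (hmul : x * y ∈ s) (k : ℕ) :
    x ^ k + y ^ k ∈ s := by
  induction k using Nat.twoStepInduction with
  | zero => simpa using add_mem (one_mem s) (one_mem s)
  | one => simpa using hadd
  | more k ih₀ ih₁ =>
    have newton : x ^ (k + 2) + y ^ (k + 2) =
        (x + y) * (x ^ (k + 1) + y ^ (k + 1)) - x * y * (x ^ k + y ^ k) := by ring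
    rw [newton]
    exact sub_mem (mul_mem hadd ih₁) (mul_mem hmul ih₀)

theorem pow_mul_pow_add_pow_mul_pow_mem (hadd : x + y ∈ s) (hmul : x * y ∈ s) (a b : ℕ) :
    x ^ a * y ^ b + x ^ b * y ^ a ∈ s := by
  wlog hab : a ≤ b generalizing a b
  · simpa only [add_comm] using this b a (le_of_not_ge hab)
  obtain ⟨k, rfl⟩ := Nat.exists_eq_add_of_le hab
  have factor : x ^ a * y ^ (a + k) + x ^ (a + k) * y ^ a = (x * y) ^ a * (x ^ k + y ^ k) := by
    ring
  rw [factor]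
  exact mul_mem (pow_mem hmul a) (pow_add_pow_mem hadd hmul k)

variable {ι : Type*} [DecidableEq ι] {X : ι → A} {i j : ι}

theorem Finsupp.prod_pow_add_prod_pow_comp_swap_mem (hij : i ≠ j)
    (hX : ∀ k, k ≠ i → k ≠ j → X k ∈ s) (hadd : X i + X j ∈ s) (hmul : X i * X j ∈ s)
    (d : ι →₀ ℕ) :
    d.prod (fun k e ↦ X k ^ e) + d.prod (fun k e ↦ (X ∘ swap i j) k ^ e) ∈ s := by
  set t := {i, j} ∪ d.support
  have split : ∀ Y : ι → A,
      d.prod (fun k e ↦ Y k ^ e) = (∏ k ∈ t \ {i, j}, Y k ^ d k) * (Y i ^ d i * Y j ^ d j) := by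
    intro Y
    rw [d.prod_of_support_subset subset_union_right _ fun _ _ ↦ pow_zero _,
      ← prod_sdiff subset_union_left, prod_pair hij]
  have rest : ∏ k ∈ t \ {i, j}, (X ∘ swap i j) k ^ d k = ∏ k ∈ t \ {i, j}, X k ^ d k := by
    refine Finset.prod_congr rfl fun k hk ↦ ?_
    simp only [mem_sdiff, mem_insert, mem_singleton, not_or] at hk
    rw [Function.comp_apply, swap_apply_of_ne_of_ne hk.2.1 hk.2.2]
  rw [split, split, rest, Function.comp_apply, Function.comp_apply, swap_apply_left,
    swap_apply_right, ← mul_add, mul_comm (X j ^ _)]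
  refine mul_mem (prod_mem fun k hk ↦ pow_mem ?_ _) (pow_mul_pow_add_pow_mul_pow_mem hadd hmul ..)
  simp only [mem_sdiff, mem_insert, mem_singleton, not_or] at hk
  exact hX k hk.2.1 hk.2.2

end SubringClass

theorem MvPolynomial.aeval_mem_of_rename_swap_eq {R A ι : Type*} [CommRing R] [Invertible (2 : R)]
    [CommRing A] [Algebra R A] [DecidableEq ι] {S : Subalgebra R A} {X : ι → A} {i j : ι}
    (hij : i ≠ j) (hX : ∀ k, k ≠ i → k ≠ j → X k ∈ S) (hadd : X i + X j ∈ S)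
    (hmul : X i * X j ∈ S) {f : MvPolynomial ι R} (hf : rename (swap i j) f = f) :
    aeval X f ∈ S := by
  have symmetrized : aeval X f + aeval (X ∘ swap i j) f ∈ S := by
    rw [f.as_sum, map_sum, map_sum, ← sum_add_distrib]
    refine sum_mem fun d _ ↦ ?_
    rw [aeval_monomial, aeval_monomial, ← mul_add, ← Algebra.smul_def]
    exact S.smul_mem (d.prod_pow_add_prod_pow_comp_swap_mem hij hX hadd hmul) _
  rw [← aeval_rename, hf, ← two_smul R] at symmetrized
  simpa only [smul_smul, invOf_mul_self, one_smul] using S.smul_mem symmetrized (⅟2 : R)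

theorem MonoidAlgebra.mem_center_of_commute_of_mclosure_eq_top {k G : Type*} [CommSemiring k]
    [Monoid G] {s : Set G} (hs : Submonoid.closure s = ⊤) {a : MonoidAlgebra k G}
    (ha : ∀ g ∈ s, Commute (of k G g) a) : a ∈ Subalgebra.center k (MonoidAlgebra k G) := by
  have hG : ∀ g, Commute (of k G g) a := by
    have hle : Submonoid.closure s ≤ (Submonoid.centralizer {a}).comap (of k G) :=
      Submonoid.closure_le.mpr fun g hg ↦ Submonoid.mem_centralizer_iff.mpr fun _ h ↦ by
        rw [Set.mem_singleton_iff.mp h]; exact (ha g hg).eq.symm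
    rw [hs] at hle
    exact fun g ↦ (Submonoid.mem_centralizer_iff.mp (hle (Submonoid.mem_top g)) a rfl).symm
  rw [Subalgebra.mem_center_iff]
  intro b
  induction b using MonoidAlgebra.induction_on with
  | of g => exact hG g
  | add b c hb hc => rw [add_mul, mul_add, hb, hc]
  | smul r b hb => rw [smul_mul_assoc, mul_smul_comm, hb]

theorem Finset.map_swap_eq_self {α : Type*} [DecidableEq α] {t : Finset α} {a b : α}
    (h : a ∈ t ↔ b ∈ t) : t.map (swap a b).toEmbedding = t := by
  ext x
  rw [mem_map_equiv, symm_swap, swap_apply_def]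
  split_ifs with hxa hxb
  · rw [hxa, h]
  · rw [hxb, h]
  · rfl

section Transpositions

variable {k α : Type*} [CommSemiring k] [DecidableEq α]

theorem MonoidAlgebra.of_mul_sum_swap_of_map_eq {σ : Perm α} {t : Finset α}
    (ht : t.map σ.toEmbedding = t) (c : α) :
    of k _ σ * ∑ a ∈ t, of k _ (swap a c) = (∑ a ∈ t, of k _ (swap a (σ c))) * of k _ σ := by
  conv_rhs => rw [← ht, sum_map]
  rw [mul_sum, sum_mul]
  refine Finset.sum_congr rfl fun a _ ↦ ?_
  rw [← map_mul, ← map_mul, mul_swap_eq_swap_mul]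
  rfl

theorem MonoidAlgebra.commute_of_sum_swap {σ : Perm α} {t : Finset α}
    (ht : t.map σ.toEmbedding = t) {c : α} (hc : σ c = c) :
    Commute (of k _ σ) (∑ a ∈ t, of k _ (swap a c)) := by
  have h := of_mul_sum_swap_of_map_eq (k := k) ht c
  rwa [hc] at h

end Transpositions

theorem JM_commute (n : ℕ) (b c : Fin n) : Commute (JM n b) (JM n c) := by
  wlog hbc : b < c generalizing b c
  · rcases (not_lt.mp hbc).eq_or_lt with rfl | hcb
    · exact Commute.refl _
    · exact (this c b hcb).symm
  refine Commute.sum_left _ _ _ fun a ha ↦ commute_of_sum_swap (map_swap_eq_self ?_) ?_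
  · simp only [mem_filter, mem_univ, true_and] at ha ⊢
    exact iff_of_true (ha.trans hbc) hbc
  · simp only [mem_filter, mem_univ, true_and] at ha
    exact swap_apply_of_ne_of_ne (ha.trans hbc).ne' hbc.ne'

section Adjacent

variable {m : ℕ} (i : Fin m)

theorem JM_succ : JM (m + 1) i.succ = of ℂ _ (swap i.castSucc i.succ) +
    ∑ a ∈ univ.filter (· < i.castSucc), of ℂ _ (swap a i.succ) := by
  have hset : univ.filter (· < i.succ) = insert i.castSucc (univ.filter (· < i.castSucc)) := by
    ext a
    simp only [mem_filter, mem_univ, true_and, mem_insert, Fin.lt_def, Fin.ext_iff,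
      Fin.val_castSucc, Fin.val_succ]
    omega
  rw [JM, hset, sum_insert (by simp)]

theorem map_swap_filter_lt_castSucc :
    (univ.filter (· < i.castSucc)).map (swap i.castSucc i.succ).toEmbedding =
      univ.filter (· < i.castSucc) :=
  map_swap_eq_self (by simp [Fin.lt_def])

theorem of_swap_mul_JM_castSucc :
    of ℂ _ (swap i.castSucc i.succ) * JM (m + 1) i.castSucc =
      JM (m + 1) i.succ * of ℂ _ (swap i.castSucc i.succ) - 1 := by
  rw [JM, of_mul_sum_swap_of_map_eq (map_swap_filter_lt_castSucc i), swap_apply_left, JM_succ,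
    add_mul, ← map_mul, swap_mul_self, map_one, add_sub_cancel_left]

theorem of_swap_mul_JM_succ :
    of ℂ _ (swap i.castSucc i.succ) * JM (m + 1) i.succ =
      JM (m + 1) i.castSucc * of ℂ _ (swap i.castSucc i.succ) + 1 := by
  rw [JM_succ, mul_add, ← map_mul, swap_mul_self, map_one,
    of_mul_sum_swap_of_map_eq (map_swap_filter_lt_castSucc i), swap_apply_right]
  exact add_comm _ _

theorem commute_of_swap_JM_of_ne {b : Fin (m + 1)} (hc : b ≠ i.castSucc) (hs : b ≠ i.succ) :
    Commute (of ℂ _ (swap i.castSucc i.succ)) (JM (m + 1) b) := by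
  refine commute_of_sum_swap (map_swap_eq_self ?_) (swap_apply_of_ne_of_ne hc hs)
  simp only [mem_filter, mem_univ, true_and, Fin.lt_def, Fin.val_castSucc, Fin.val_succ]
  rw [Ne, Fin.ext_iff, Fin.val_castSucc] at hc
  rw [Ne, Fin.ext_iff, Fin.val_succ] at hs
  omega

theorem commute_of_swap_JM_add :
    Commute (of ℂ _ (swap i.castSucc i.succ)) (JM (m + 1) i.castSucc + JM (m + 1) i.succ) := by
  rw [Commute, SemiconjBy, mul_add, add_mul, of_swap_mul_JM_castSucc, of_swap_mul_JM_succ]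
  abel

theorem commute_of_swap_JM_mul :
    Commute (of ℂ _ (swap i.castSucc i.succ)) (JM (m + 1) i.castSucc * JM (m + 1) i.succ) := by
  rw [Commute, SemiconjBy, ← mul_assoc, of_swap_mul_JM_castSucc, sub_mul, mul_assoc,
    of_swap_mul_JM_succ, mul_add, ← mul_assoc, (JM_commute _ _ _).eq, mul_one, one_mul,
    add_sub_cancel_right]

end Adjacent

noncomputable def JMAlgebra (n : ℕ) : Subalgebra ℂ (MonoidAlgebra ℂ (Perm (Fin n))) :=
  Algebra.adjoin ℂ (Set.range (JM n))

instance (n : ℕ) : IsMulCommutative (JMAlgebra n) :=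
  Algebra.isMulCommutative_adjoin ℂ <| by
    rintro _ ⟨b, rfl⟩ _ ⟨c, rfl⟩
    exact (JM_commute n b c).eq

-- turns `IsMulCommutative (JMAlgebra n)` into the `CommRing` instance that `aeval` needs
open scoped IsMulCommutative

noncomputable def JMAlgebra.gen (n : ℕ) (b : Fin n) : JMAlgebra n :=
  ⟨JM n b, Algebra.subset_adjoin ⟨b, rfl⟩⟩

theorem evalJM_eq_aeval (n : ℕ) (f : MvPolynomial (Fin n) ℂ) :
    evalJM n f = aeval (JMAlgebra.gen n) f := by
  rw [aeval_def, eval₂_eq', evalJM, ← Subalgebra.val_apply, map_sum]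
  refine Finset.sum_congr rfl fun d _ ↦ ?_
  rw [← Algebra.smul_def, map_smul, ← Fin.prod_ofFn, map_list_prod, List.map_ofFn]
  rfl

theorem commute_of_swap_evalJM {m : ℕ} (i : Fin m) {f : MvPolynomial (Fin (m + 1)) ℂ}
    (hf : rename (swap i.castSucc i.succ) f = f) :
    Commute (of ℂ _ (swap i.castSucc i.succ)) (evalJM (m + 1) f) := by
  let S := (Subalgebra.centralizer ℂ {of ℂ _ (swap i.castSucc i.succ)}).comap
    (JMAlgebra (m + 1)).val
  have mem_S_iff (x : JMAlgebra (m + 1)) :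
      x ∈ S ↔ Commute (of ℂ _ (swap i.castSucc i.succ)) x := by
    simp only [S, Subalgebra.mem_comap, Subalgebra.mem_centralizer_iff, Set.mem_singleton_iff,
      forall_eq]
    rfl
  rw [evalJM_eq_aeval]
  have hgen : ∀ b, b ≠ i.castSucc → b ≠ i.succ → JMAlgebra.gen (m + 1) b ∈ S :=
    fun b hc hs ↦ (mem_S_iff (JMAlgebra.gen _ b)).mpr (commute_of_swap_JM_of_ne i hc hs)
  have hadd : JMAlgebra.gen (m + 1) i.castSucc + JMAlgebra.gen (m + 1) i.succ ∈ S :=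
    (mem_S_iff _).mpr (commute_of_swap_JM_add i)
  have hmul : JMAlgebra.gen (m + 1) i.castSucc * JMAlgebra.gen (m + 1) i.succ ∈ S :=
    (mem_S_iff _).mpr (commute_of_swap_JM_mul i)
  exact (mem_S_iff _).mp
    (aeval_mem_of_rename_swap_eq Fin.castSucc_lt_succ.ne hgen hadd hmul hf)

/-- For every `n ≥ 1` and every symmetric polynomial `f` in `n` variables over `ℂ`,
the element `f(J_1,…,J_n)` lies in the center of the group algebra `ℂ[S_n]`. -/
theorem evalJM_symmetric_mem_center (n : ℕ) (hn : 1 ≤ n) (f : MvPolynomial (Fin n) ℂ)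
    (hf : f.IsSymmetric) :
    evalJM n f ∈ Subalgebra.center ℂ (MonoidAlgebra ℂ (Equiv.Perm (Fin n))) := by
  obtain ⟨m, rfl⟩ := Nat.exists_eq_add_of_le' hn
  refine MonoidAlgebra.mem_center_of_commute_of_mclosure_eq_top
    (Perm.mclosure_swap_castSucc_succ m) ?_
  rintro _ ⟨i, rfl⟩
  exact commute_of_swap_evalJM i (hf _)
end

section
/- For every n ≥ 1 and every d ≥ 0, the d-th elementary symmetric polynomial evaluated at the Jucys–Murphy elements satisfies e_d(J_1,…,J_n) = Σ_{σ ∈ S_n, ℓ*(σ) = d} σ in ℂ[S_n]; equivalently, Π_{b=1}^n (X + J_b) = Σ_{σ ∈ S_n} X^{n − ℓ*(σ)} σ in the polynomial ring over ℂ[S_n] (Jucys' theorem). -/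
/-- The colength `ℓ*(σ) = n − c(σ)`, where `c(σ)` is the number of cycles of `σ`
(fixed points counted as cycles of length 1). -/
noncomputable def colength {n : ℕ} (σ : Equiv.Perm (Fin n)) : ℕ :=
  n - (σ.cycleType.card + (n - σ.support.card))

/-- The `d`-th elementary symmetric polynomial evaluated at the Jucys–Murphy elements:
`e_d(J_1,…,J_n) = Σ_{S ⊆ {1,…,n}, |S| = d} Π_{b ∈ S} J_b`, each product taken in
increasing order (the `J_b` pairwise commute, so any order gives the same element). -/
noncomputable def esymmJM (n : ℕ) (d : ℕ) : MonoidAlgebra ℂ (Equiv.Perm (Fin n)) :=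
  ∑ S ∈ Finset.univ.powersetCard d, ((S.sort (· ≤ ·)).map (JM n)).prod

/-!
Let `G_m` be the permutations of `Fin n` moving only `0, …, m - 1`. Every `τ ∈ G_{m+1}` is
uniquely `σ * swap a m` with `σ ∈ G_m` and `a ≤ m` (namely `a = τ⁻¹ m`), and for `a < m` this
right multiplication inserts the fixed point `m` of `σ` into the cycle through `a` (or merges
the fixed points `a` and `m` into a transposition), so the colength goes up by exactly one. Hence
`∑_{τ ∈ G_{m+1}} X ^ (m + 1 - ℓ*(τ)) τ = (∑_{σ ∈ G_m} X ^ (m - ℓ*(σ)) σ) * (X + J_m)`, and the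
colength-graded sums obey the same recursion as the elementary symmetric sums of `J_0, …, J_m`.
-/

open Equiv Finset

theorem Finset.sort_insert_of_forall_lt {α : Type*} [LinearOrder α] {s : Finset α} {b : α}
    (h : ∀ x ∈ s, x < b) : (insert b s).sort (· ≤ ·) = s.sort (· ≤ ·) ++ [b] := by
  have hb : b ∉ s := fun hb => lt_irrefl b (h b hb)
  refine List.Perm.eq_of_pairwise' (r := (· ≤ ·)) (pairwise_sort _ _) ?_ ?_
  · simpa [List.pairwise_append] using fun x hx => (h x hx).le
  · refine (sort_perm_toList _ _).trans ((toList_insert hb).trans ?_)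
    exact ((sort_perm_toList _ _).symm.cons b).trans (List.perm_append_singleton b _).symm

theorem Finset.sum_powersetCard_insert_of_forall_lt {α R : Type*} [LinearOrder α] [Semiring R]
    (f : α → R) {s : Finset α} {b : α} (h : ∀ x ∈ s, x < b) (d : ℕ) :
    ∑ S ∈ (insert b s).powersetCard (d + 1), ((S.sort (· ≤ ·)).map f).prod =
      ∑ S ∈ s.powersetCard (d + 1), ((S.sort (· ≤ ·)).map f).prod +
        (∑ S ∈ s.powersetCard d, ((S.sort (· ≤ ·)).map f).prod) * f b := by
  have hb : b ∉ s := fun hb => lt_irrefl b (h b hb)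
  have hnot : ∀ S ∈ s.powersetCard d, b ∉ S := fun S hS hbS =>
    hb ((mem_powersetCard.1 hS).1 hbS)
  rw [powersetCard_succ_insert hb, sum_union, sum_image, sum_mul]
  · congr 1
    refine sum_congr rfl fun S hS => ?_
    rw [sort_insert_of_forall_lt fun x hx => h x ((mem_powersetCard.1 hS).1 hx)]
    simp
  · intro S hS T hT hST
    simpa [erase_insert (hnot S hS), erase_insert (hnot T hT)] using congrArg (erase · b) hST
  · simp only [disjoint_left, mem_image, not_exists, not_and]
    intro S hS T _ hTS
    exact hb ((mem_powersetCard.1 hS).1 (hTS ▸ mem_insert_self b T))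

namespace Equiv.Perm

variable {α : Type*} [DecidableEq α] [Fintype α]

theorem IsCycle.mul_swap {c : Perm α} (hc : c.IsCycle) {a b : α} (ha : c a ≠ a)
    (hb : c b = b) : (c * swap a b).IsCycle := by
  have hab : a ≠ b := fun h => ha (h ▸ hb)
  set g := c * swap a b
  have hga : g a = b := by simp [g, hb]
  have hgb : g b = c a := by simp [g]
  -- `g` follows the cycle of `c` through `a`, with the detour `a ↦ b ↦ c a`.
  have orbit : ∀ k : ℕ, g.SameCycle a ((c ^ k) a) := by
    intro k
    induction k with
    | zero => exact SameCycle.refl g a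
    | succ k ih =>
      rw [pow_succ', mul_apply]
      by_cases hk : (c ^ k) a = a
      · rw [hk, ← hgb, ← hga, sameCycle_apply_right, sameCycle_apply_right]
      · have hkb : (c ^ k) a ≠ b := fun h =>
          hab ((c ^ k).injective (h.trans (pow_apply_eq_self_of_apply_eq_self hb k).symm))
        have hgk : g ((c ^ k) a) = c ((c ^ k) a) := by simp [g, swap_apply_of_ne_of_ne hk hkb]
        rwa [← hgk, sameCycle_apply_right]
  refine ⟨a, by rw [hga]; exact hab.symm, fun y hy => ?_⟩
  by_cases hya : y = a
  · rw [hya]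
  by_cases hyb : y = b
  · rw [hyb, ← hga, sameCycle_apply_right]
  have hcy : c y ≠ y := by simpa [g, swap_apply_of_ne_of_ne hya hyb] using hy
  obtain ⟨k, -, rfl⟩ := (hc.sameCycle ha hcy).exists_pow_eq'
  exact orbit k

theorem card_cycleType_le_card_support (σ : Perm α) :
    Multiset.card σ.cycleType ≤ #σ.support := by
  rw [← sum_cycleType]
  simpa using Multiset.card_nsmul_le_sum fun k hk =>
    (two_le_of_mem_cycleType hk).trans' one_le_two

theorem support_mul_swap_of_apply_ne {σ : Perm α} {a b : α} (ha : σ a ≠ a) (hb : σ b = b) :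
    (σ * swap a b).support = insert b σ.support := by
  have hab : a ≠ b := fun h => ha (h ▸ hb)
  ext x
  rcases eq_or_ne x a with rfl | hxa
  · simp [ha, hab, hb, hab.symm]
  rcases eq_or_ne x b with rfl | hxb
  · simpa using fun h => hab (σ.injective (h.trans hb.symm))
  simp [swap_apply_of_ne_of_ne hxa hxb, hxb]

omit [Fintype α] in
theorem disjoint_swap_of_apply_eq {σ : Perm α} {a b : α} (ha : σ a = a) (hb : σ b = b) :
    Disjoint σ (swap a b) := by
  intro x
  rcases eq_or_ne x a with rfl | hxa
  · exact .inl ha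
  rcases eq_or_ne x b with rfl | hxb
  · exact .inl hb
  exact .inr (swap_apply_of_ne_of_ne hxa hxb)

theorem cycleType_mul_swap_of_apply_eq {σ : Perm α} {a b : α} (hab : a ≠ b) (ha : σ a = a)
    (hb : σ b = b) : (σ * swap a b).cycleType = 2 ::ₘ σ.cycleType := by
  rw [(disjoint_swap_of_apply_eq ha hb).cycleType_mul, (isCycle_swap hab).cycleType,
    card_support_swap hab, add_comm, Multiset.singleton_add]

theorem card_support_mul_swap_of_apply_eq {σ : Perm α} {a b : α} (hab : a ≠ b) (ha : σ a = a)
    (hb : σ b = b) : #(σ * swap a b).support = #σ.support + 2 := by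
  rw [(disjoint_swap_of_apply_eq ha hb).card_support_mul, card_support_swap hab]

/-- `σ * swap a b` is `σ` with the fixed point `b` inserted after `a` in the cycle through `a`. -/
theorem card_cycleType_mul_swap_of_apply_ne {σ : Perm α} {a b : α} (ha : σ a ≠ a)
    (hb : σ b = b) : Multiset.card (σ * swap a b).cycleType = Multiset.card σ.cycleType := by
  set c := σ.cycleOf a
  set ρ := σ * c⁻¹
  have hc : c.IsCycle := σ.isCycle_cycleOf ha
  have hca : c a ≠ a := by rwa [cycleOf_apply_self]
  have hcb : c b = b := notMem_support.1 fun h => notMem_support.2 hb (support_cycleOf_le σ a h)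
  have hρc : Disjoint ρ c := disjoint_mul_inv_of_mem_cycleFactorsFinset
    (cycleOf_mem_cycleFactorsFinset_iff.2 (mem_support.2 ha))
  have hρb : ρ b = b := by rw [mul_apply, inv_eq_iff_eq.2 hcb.symm, hb]
  have hρc' : Disjoint ρ (c * swap a b) := by
    rw [disjoint_iff_disjoint_support, support_mul_swap_of_apply_ne hca hcb,
      disjoint_insert_right]
    exact ⟨notMem_support.2 hρb, disjoint_iff_disjoint_support.1 hρc⟩
  have hσ : σ = ρ * c := by simp [ρ]
  rw [hσ, mul_assoc, hρc'.cycleType_mul, hρc.cycleType_mul, (hc.mul_swap hca hcb).cycleType,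
    hc.cycleType]
  simp

def supportedIn (s : Finset α) : Finset (Perm α) := {σ | σ.support ⊆ s}

theorem mem_supportedIn {s : Finset α} {σ : Perm α} :
    σ ∈ supportedIn s ↔ ∀ x ∉ s, σ x = x := by
  simp only [supportedIn, mem_filter, mem_univ, true_and, subset_iff, mem_support]
  exact forall_congr' fun x => not_imp_comm

theorem supportedIn_empty : supportedIn (∅ : Finset α) = {1} := by
  ext σ
  simp [supportedIn, support_eq_empty_iff]

theorem supportedIn_univ : supportedIn (univ : Finset α) = univ := by
  ext σ
  simp [supportedIn]

/-- Every permutation supported in `insert b s` is uniquely `σ * swap a b` with `σ` supported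
in `s` and `a ∈ insert b s`, namely `a = τ⁻¹ b`. -/
theorem sum_supportedIn_insert {M : Type*} [AddCommMonoid M] {s : Finset α} {b : α}
    (hb : b ∉ s) (F : Perm α → M) :
    ∑ τ ∈ supportedIn (insert b s), F τ =
      ∑ σ ∈ supportedIn s, (F σ + ∑ a ∈ s, F (σ * swap a b)) := by
  have hfactor : ∑ τ ∈ supportedIn (insert b s), F τ =
      ∑ a ∈ insert b s, ∑ σ ∈ supportedIn s, F (σ * swap a b) := by
    rw [← sum_product']
    refine sum_nbij' (fun τ => (τ⁻¹ b, τ * swap (τ⁻¹ b) b)) (fun p => p.2 * swap p.1 b)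
      ?_ ?_ ?_ ?_ fun τ _ => by simp only [mul_swap_mul_self]
    · intro τ hτ
      rw [mem_supportedIn] at hτ
      have hτa : τ (τ⁻¹ b) = b := eq_inv_iff_eq.1 rfl
      simp only [mem_product, mem_insert, mem_supportedIn]
      refine ⟨?_, fun x hx => ?_⟩
      · by_contra! h
        exact h.1 ((hτ _ (by rw [mem_insert, not_or]; exact h)).symm.trans hτa)
      rcases eq_or_ne x b with rfl | hxb
      · simp
      have hτx : τ x = x := hτ x (by simp [hxb, hx])
      have hxa : x ≠ τ⁻¹ b := fun h => hxb (by rw [← hτx, h, hτa])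
      rw [mul_apply, swap_apply_of_ne_of_ne hxa hxb, hτx]
    · rintro ⟨a, σ⟩ h
      simp only [mem_product, mem_insert, mem_supportedIn] at h ⊢
      intro x hx
      rw [not_or] at hx
      have hxa : x ≠ a := by
        rintro rfl
        exact h.1.elim hx.1 hx.2
      rw [mul_apply, swap_apply_of_ne_of_ne hxa hx.1, h.2 x hx.2]
    · intro τ _
      simp only [mul_swap_mul_self]
    · rintro ⟨a, σ⟩ h
      have hσb : σ b = b := mem_supportedIn.1 (mem_product.1 h).2 b hb
      have hinv : (σ * swap a b)⁻¹ b = a := by rw [inv_eq_iff_eq]; simp [hσb]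
      simp only [hinv, mul_swap_mul_self]
  rw [hfactor, sum_insert hb, sum_comm, ← sum_add_distrib]
  simp only [swap_self, ← one_def, mul_one]

end Equiv.Perm

open Equiv.Perm Polynomial

section Colength

variable {n : ℕ}

theorem colength_eq_card_support_sub (σ : Perm (Fin n)) :
    colength σ = #σ.support - Multiset.card σ.cycleType := by
  have hcycles := card_cycleType_le_card_support σ
  have hsupport : #σ.support ≤ n := by simpa using card_le_univ σ.support
  unfold colength
  omega

theorem colength_one : colength (1 : Perm (Fin n)) = 0 := by
  simp [colength_eq_card_support_sub]

theorem colength_le_card_of_mem_supportedIn {s : Finset (Fin n)} {σ : Perm (Fin n)}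
    (hσ : σ ∈ supportedIn s) : colength σ ≤ #s := by
  rw [colength_eq_card_support_sub]
  exact (Nat.sub_le _ _).trans (card_le_card (mem_filter.1 hσ).2)

theorem colength_mul_swap {σ : Perm (Fin n)} {a b : Fin n} (hab : a ≠ b) (hb : σ b = b) :
    colength (σ * swap a b) = colength σ + 1 := by
  have hcycles := card_cycleType_le_card_support σ
  rw [colength_eq_card_support_sub, colength_eq_card_support_sub]
  rcases eq_or_ne (σ a) a with ha | ha
  · rw [cycleType_mul_swap_of_apply_eq hab ha hb, card_support_mul_swap_of_apply_eq hab ha hb,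
      Multiset.card_cons]
    omega
  · rw [card_cycleType_mul_swap_of_apply_ne ha hb, support_mul_swap_of_apply_ne ha hb,
      card_insert_of_notMem (notMem_support.2 hb)]
    omega

end Colength

section Prefix

variable {n m : ℕ}

def finPrefix (n m : ℕ) : Finset (Fin n) := {c | (c : ℕ) < m}

theorem finPrefix_zero : finPrefix n 0 = ∅ := by
  simp [finPrefix]

theorem finPrefix_self : finPrefix n n = univ := by
  simp [finPrefix]

theorem finPrefix_succ (h : m < n) : finPrefix n (m + 1) = insert ⟨m, h⟩ (finPrefix n m) := by
  ext c
  simp only [finPrefix, mem_filter, mem_univ, true_and, mem_insert, Fin.ext_iff]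
  omega

theorem card_finPrefix (h : m ≤ n) : #(finPrefix n m) = m := by
  rw [finPrefix, Fin.card_filter_val_lt, min_eq_right h]

theorem lt_of_mem_finPrefix (h : m < n) {a : Fin n} (ha : a ∈ finPrefix n m) : a < ⟨m, h⟩ := by
  simpa [finPrefix, Fin.lt_def] using ha

theorem JM_eq_sum_finPrefix (h : m < n) :
    JM n ⟨m, h⟩ = ∑ a ∈ finPrefix n m, MonoidAlgebra.of ℂ _ (swap a ⟨m, h⟩) := by
  unfold JM finPrefix
  congr 1

end Prefix

section Recursion

variable {n m : ℕ}

local notation "ofPerm" => MonoidAlgebra.of ℂ (Perm (Fin n))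

theorem of_mul_JM (h : m < n) {σ : Perm (Fin n)} :
    ofPerm σ * JM n ⟨m, h⟩ = ∑ a ∈ finPrefix n m, ofPerm (σ * swap a ⟨m, h⟩) := by
  simp only [JM_eq_sum_finPrefix h, mul_sum, map_mul]

theorem colength_mul_swap_of_mem_finPrefix (h : m < n) {σ : Perm (Fin n)}
    (hσ : σ ∈ supportedIn (finPrefix n m)) {a : Fin n} (ha : a ∈ finPrefix n m) :
    colength (σ * swap a ⟨m, h⟩) = colength σ + 1 :=
  colength_mul_swap (lt_of_mem_finPrefix h ha).ne
    (mem_supportedIn.1 hσ _ (by simp [finPrefix]))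

theorem sum_supportedIn_finPrefix_succ (h : m < n) (d : ℕ) :
    ∑ τ ∈ supportedIn (finPrefix n (m + 1)) with colength τ = d, ofPerm τ =
      ∑ σ ∈ supportedIn (finPrefix n m) with colength σ = d, ofPerm σ +
        ∑ σ ∈ supportedIn (finPrefix n m) with colength σ + 1 = d, ofPerm σ * JM n ⟨m, h⟩ := by
  have hm : (⟨m, h⟩ : Fin n) ∉ finPrefix n m := by simp [finPrefix]
  simp only [sum_filter, finPrefix_succ h, sum_supportedIn_insert hm, sum_add_distrib]
  congr 1
  refine sum_congr rfl fun σ hσ => ?_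
  have hswap : ∀ a ∈ finPrefix n m, colength (σ * swap a ⟨m, h⟩) = colength σ + 1 :=
    fun a ha => colength_mul_swap_of_mem_finPrefix h hσ ha
  rw [of_mul_JM h, sum_congr rfl fun a ha => by rw [hswap a ha]]
  split_ifs <;> simp

theorem sum_powersetCard_finPrefix (h : m ≤ n) (d : ℕ) :
    ∑ S ∈ (finPrefix n m).powersetCard d, ((S.sort (· ≤ ·)).map (JM n)).prod =
      ∑ σ ∈ supportedIn (finPrefix n m) with colength σ = d, ofPerm σ := by
  induction m generalizing d with
  | zero =>
    rw [finPrefix_zero, supportedIn_empty]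
    cases d with
    | zero => simp [filter_singleton, colength_one, MonoidAlgebra.one_def]
    | succ d =>
      rw [powersetCard_eq_empty.2 (by simp)]
      simp [filter_singleton, colength_one]
  | succ m ih =>
    have hm : m < n := h
    cases d with
    | zero =>
      have h₀ := ih hm.le 0
      simp only [powersetCard_zero, sum_singleton] at h₀ ⊢
      rw [sum_supportedIn_finPrefix_succ hm, ← h₀]
      simp
    | succ d =>
      rw [finPrefix_succ hm,
        sum_powersetCard_insert_of_forall_lt _ fun x hx => lt_of_mem_finPrefix hm hx,
        ← finPrefix_succ hm, ih hm.le, ih hm.le, sum_supportedIn_finPrefix_succ hm, sum_mul]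
      simp only [Nat.add_right_cancel_iff]

theorem prod_take_ofFn_X_add_C_JM (h : m ≤ n) :
    ((List.ofFn fun b : Fin n => X + C (JM n b)).take m).prod =
      ∑ σ ∈ supportedIn (finPrefix n m), C (ofPerm σ) * X ^ (m - colength σ) := by
  induction m with
  | zero =>
    rw [finPrefix_zero, supportedIn_empty, sum_singleton, colength_one, map_one]
    simp
  | succ m ih =>
    have hm : m < n := h
    rw [List.prod_take_succ _ _ (by simpa using hm), ih hm.le, List.getElem_ofFn,
      finPrefix_succ hm, sum_supportedIn_insert (by simp [finPrefix]), sum_mul]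
    refine sum_congr rfl fun σ hσ => ?_
    have hℓ : colength σ ≤ m := card_finPrefix hm.le ▸ colength_le_card_of_mem_supportedIn hσ
    calc C (ofPerm σ) * X ^ (m - colength σ) * (X + C (JM n ⟨m, hm⟩))
        = C (ofPerm σ) * X ^ (m + 1 - colength σ) +
            C (ofPerm σ * JM n ⟨m, hm⟩) * X ^ (m - colength σ) := by
          rw [mul_add, mul_assoc, ← pow_succ, Nat.sub_add_comm hℓ, mul_assoc, X_pow_mul,
            ← mul_assoc, ← C_mul]
      _ = _ := by
          rw [of_mul_JM hm, map_sum, sum_mul]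
          refine congrArg (_ + ·) (sum_congr rfl fun a ha => ?_)
          rw [colength_mul_swap_of_mem_finPrefix hm hσ ha, Nat.add_sub_add_right]

end Recursion

theorem jucys_theorem_general (n : ℕ) :
    (∀ d : ℕ, esymmJM n d =
      ∑ σ ∈ Finset.univ.filter fun σ : Equiv.Perm (Fin n) => colength σ = d,
        MonoidAlgebra.of ℂ (Equiv.Perm (Fin n)) σ) ∧
    (List.ofFn fun b : Fin n => Polynomial.X + Polynomial.C (JM n b)).prod =
      ∑ σ : Equiv.Perm (Fin n),
        Polynomial.C (MonoidAlgebra.of ℂ (Equiv.Perm (Fin n)) σ) *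
          Polynomial.X ^ (n - colength σ) := by
  constructor
  · intro d
    simpa [esymmJM, finPrefix_self, supportedIn_univ] using sum_powersetCard_finPrefix le_rfl d
  · simpa [finPrefix_self, supportedIn_univ, List.take_of_length_le] using
      prod_take_ofFn_X_add_C_JM le_rfl

/-- Jucys' theorem: for every `n ≥ 1` and `d ≥ 0`,
`e_d(J_1,…,J_n) = Σ_{σ ∈ S_n, ℓ*(σ) = d} σ`; equivalently,
`Π_{b=1}^n (X + J_b) = Σ_{σ ∈ S_n} X^{n − ℓ*(σ)} σ` in `ℂ[S_n][X]`. -/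
theorem jucys_theorem (n : ℕ) (hn : 1 ≤ n) :
    (∀ d : ℕ, esymmJM n d =
      ∑ σ ∈ Finset.univ.filter fun σ : Equiv.Perm (Fin n) => colength σ = d,
        MonoidAlgebra.of ℂ (Equiv.Perm (Fin n)) σ) ∧
    (List.ofFn fun b : Fin n => Polynomial.X + Polynomial.C (JM n b)).prod =
      ∑ σ : Equiv.Perm (Fin n),
        Polynomial.C (MonoidAlgebra.of ℂ (Equiv.Perm (Fin n)) σ) *
          Polynomial.X ^ (n - colength σ) :=
  jucys_theorem_general n
end

section
/- Let n ≥ 1, let λ = (λ_1,…,λ_ℓ) be a partition of d, and let h, g ∈ S_n. Then the total number of sequences of transpositions (τ_1,…,τ_d) in S_n with signature λ satisfying τ_d ⋯ τ_1 h = g equals (d! / (λ_1! ⋯ λ_ℓ!)) times the number of weakly monotone such sequences, i.e., the count of signature-λ paths with a given endpoint is d!/Π_i λ_i! times the count of weakly monotone ones. -/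
/-- For a transposition `τ = (a b)` with `a < b`, the "second element" `b`,
realized as the largest point moved by `τ`. -/
def bval {n : ℕ} (τ : Equiv.Perm (Fin n)) : ℕ :=
  τ.support.sup fun x => (x : ℕ)

/-- The signature of a sequence of transpositions `(τ_1,…,τ_d)`: the multiset recording
the multiplicities with which the distinct values among the second elements `b_1,…,b_d`
occur. -/
def signature {n d : ℕ} (τ : Fin d → Equiv.Perm (Fin n)) : Multiset ℕ :=
  let B : Multiset ℕ := Finset.univ.val.map fun m => bval (τ m)
  B.toFinset.val.map fun b => B.count b

/-!
Group the sequences by their word `w = (b_1, …, b_d)`. The number of sequences with word `w`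
and product `g h⁻¹` is the coefficient of `g h⁻¹` in `J_{w_d} ⋯ J_{w_1}`, where
`J_b = ∑_{a < b} (a b)` is the Jucys–Murphy element of the group algebra of `S_n`. Conjugating by
a transposition whose second element is smaller than `b` permutes the transpositions `(a b)`,
so the `J_b` commute and the count only depends on the multiset of letters of `w`. A word of
signature `λ` has a stabiliser of order `∏ λ_i!` in `S_d`, so its class of rearrangements has
`d!/∏ λ_i!` elements, exactly one of which is weakly monotone.
-/

open Equiv Finset
open scoped Nat

lemma Equiv.Perm.IsSwap.conj {α : Type*} [DecidableEq α] {t : Perm α} (ht : t.IsSwap)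
    (s : Perm α) : (s * t * s⁻¹).IsSwap := by
  obtain ⟨a, b, hab, rfl⟩ := ht
  exact ⟨s a, s b, s.injective.ne hab, (swap_apply_apply s a b).symm⟩

open MonoidAlgebra in
lemma commute_single_sum_single_of_conj_mem_iff {G R : Type*} [Group G] [Semiring R]
    {a : G} {B : Finset G} (hB : ∀ b, a * b * a⁻¹ ∈ B ↔ b ∈ B) :
    Commute (single a 1 : MonoidAlgebra R G) (∑ b ∈ B, single b 1) := by
  rw [Commute, SemiconjBy, mul_sum, sum_mul]
  refine sum_nbij' (fun b => a * b * a⁻¹) (fun b => a⁻¹ * b * a) (fun b hb => (hB b).mpr hb)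
    (fun b hb => (hB _).mp (by simpa [mul_assoc] using hb)) (fun b _ => by group)
    (fun b _ => by group) fun b _ => ?_
  simp only [single_mul_single, one_mul]
  congr 1
  group

open MonoidAlgebra in
lemma ofFn_sum_single_reverse_prod {G R : Type*} [Monoid G] [Semiring R] :
    ∀ {d : ℕ} (S : Fin d → Finset G),
      (List.ofFn fun m => ∑ t ∈ S m, (single t 1 : MonoidAlgebra R G)).reverse.prod =
        ∑ τ ∈ Fintype.piFinset S, single (List.ofFn τ).reverse.prod 1
  | 0, S => by simp [MonoidAlgebra.one_def]
  | d + 1, S => by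
    have hsplit := filter_piFinset_eq_map_consEquiv S fun _ => True
    rw [filter_true, filter_true] at hsplit
    rw [List.ofFn_succ, List.reverse_cons, List.prod_append, List.prod_singleton,
      ofFn_sum_single_reverse_prod, hsplit, sum_map, sum_product_right, sum_mul]
    refine sum_congr rfl fun τ _ => ?_
    simp [mul_sum, single_mul_single]

open MonoidAlgebra in
lemma coeff_ofFn_sum_single_reverse_prod {G : Type*} [Monoid G] [DecidableEq G] {d : ℕ}
    (S : Fin d → Finset G) (c : G) :
    (List.ofFn fun m => ∑ t ∈ S m, (single t 1 : MonoidAlgebra ℕ G)).reverse.prod.coeff c =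
      #{τ ∈ Fintype.piFinset S | (List.ofFn τ).reverse.prod = c} := by
  rw [ofFn_sum_single_reverse_prod, coeff_sum, Finsupp.finsetSum_apply, card_filter]
  simp [Finsupp.single_apply]

section Rearrangement

open scoped Classical

variable {α : Type*} [LinearOrder α] {d : ℕ}

lemma eq_comp_sort_of_monotone_comp {w m : Fin d → α} {σ : Perm (Fin d)} (hm : Monotone m)
    (h : m ∘ σ = w) : m = w ∘ Tuple.sort w := by
  have hm' : w ∘ ⇑σ⁻¹ = m := by
    rw [← h, Function.comp_assoc, ← Perm.coe_mul, mul_inv_cancel, Perm.coe_one,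
      Function.comp_id]
  exact hm' ▸ Tuple.unique_monotone (hm' ▸ hm) (Tuple.monotone_sort w)

lemma card_comp_fiber_eq_card_stabilizer {A : Finset (Fin d → α)}
    (hA : ∀ w ∈ A, ∀ σ : Perm (Fin d), w ∘ σ ∈ A) {w : Fin d → α} (hw : w ∈ A) :
    #{p ∈ (univ : Finset (Perm (Fin d))) ×ˢ {m ∈ A | Monotone m} | p.2 ∘ p.1 = w} =
      #{σ : Perm (Fin d) | w ∘ σ = w} := by
  have sorted_mem : w ∘ Tuple.sort w ∈ {m ∈ A | Monotone m} :=
    mem_filter.mpr ⟨hA w hw _, Tuple.monotone_sort w⟩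
  refine card_nbij' (fun p => Tuple.sort w * p.1)
    (fun σ => ((Tuple.sort w)⁻¹ * σ, w ∘ Tuple.sort w)) ?_ ?_ ?_ ?_ <;>
    simp only [coe_filter, mem_product, mem_filter, mem_univ, true_and, Set.mem_ofPred_eq,
      Set.MapsTo, Set.LeftInvOn, Prod.forall]
  · intro σ m ⟨⟨_, hm⟩, h⟩
    rw [Perm.coe_mul, ← Function.comp_assoc, ← eq_comp_sort_of_monotone_comp hm h, h]
  · intro σ hσ
    refine ⟨mem_filter.mp sorted_mem, ?_⟩
    rw [Function.comp_assoc, ← Perm.coe_mul, mul_inv_cancel_left, hσ]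
  · intro σ m ⟨⟨_, hm⟩, h⟩
    simp [eq_comp_sort_of_monotone_comp hm h]
  · simp

theorem sum_card_stabilizer_smul_eq {M : Type*} [AddCommMonoid M] (A : Finset (Fin d → α))
    (hA : ∀ w ∈ A, ∀ σ : Perm (Fin d), w ∘ σ ∈ A) (F : (Fin d → α) → M)
    (hF : ∀ w (σ : Perm (Fin d)), F (w ∘ σ) = F w) :
    ∑ w ∈ A, #{σ : Perm (Fin d) | w ∘ σ = w} • F w = d ! • ∑ w ∈ A with Monotone w, F w := by
  set pairs := (univ : Finset (Perm (Fin d))) ×ˢ {m ∈ A | Monotone m}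
  have maps_to : ∀ p ∈ pairs, p.2 ∘ p.1 ∈ A := fun p hp =>
    hA _ (mem_filter.mp (mem_product.mp hp).2).1 _
  calc ∑ w ∈ A, #{σ : Perm (Fin d) | w ∘ σ = w} • F w
      = ∑ w ∈ A, ∑ p ∈ pairs with p.2 ∘ p.1 = w, F (p.2 ∘ p.1) := by
        refine sum_congr rfl fun w hw => ?_
        rw [← card_comp_fiber_eq_card_stabilizer hA hw, ← sum_const]
        exact sum_congr rfl fun p hp => by rw [(mem_filter.mp hp).2]
    _ = ∑ p ∈ pairs, F (p.2 ∘ p.1) := sum_fiberwise_of_maps_to maps_to _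
    _ = d ! • ∑ w ∈ A with Monotone w, F w := by
        rw [sum_product, sum_congr rfl fun σ _ => sum_congr rfl fun m _ => hF m σ, sum_const,
          card_univ, Fintype.card_perm, Fintype.card_fin]

end Rearrangement

section WordSignature

variable {α : Type*} [DecidableEq α] {d : ℕ}

def wordSignature (w : Fin d → α) : Multiset ℕ :=
  let B : Multiset α := univ.val.map w
  B.toFinset.val.map fun b => B.count b

lemma signature_eq_wordSignature {n : ℕ} (τ : Fin d → Perm (Fin n)) :
    signature τ = wordSignature fun m => bval (τ m) :=
  rfl

lemma wordSignature_comp_perm (w : Fin d → α) (σ : Perm (Fin d)) :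
    wordSignature (w ∘ σ) = wordSignature w := by
  simp only [wordSignature, ← Multiset.map_map, Multiset.map_univ_val_equiv]

lemma card_stabilizer_eq_prod_factorial (w : Fin d → α) :
    #{σ : Perm (Fin d) | w ∘ σ = w} = ((wordSignature w).map Nat.factorial).prod := by
  rw [← Fintype.card_subtype, DomMulAct.stabilizer_card', wordSignature, Multiset.map_map]
  refine (prod_eq_multiset_prod _ _).symm.trans (prod_congr rfl fun b _ => ?_)
  rw [Function.comp_apply, Multiset.count_map, Fintype.card_subtype]
  exact congrArg (fun k => k !) (congrArg card (filter_congr fun a _ => eq_comm))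

end WordSignature

section Transpositions

variable {n : ℕ}

lemma le_bval_of_mem_support {τ : Perm (Fin n)} {x : Fin n} (hx : x ∈ τ.support) :
    (x : ℕ) ≤ bval τ :=
  le_sup (f := fun x : Fin n => (x : ℕ)) hx

@[simp] lemma bval_inv (τ : Perm (Fin n)) : bval τ⁻¹ = bval τ := by
  simp only [bval, Perm.support_inv]

lemma bval_conj_of_lt {s t : Perm (Fin n)} (h : bval s < bval t) :
    bval (s * t * s⁻¹) = bval t := by
  obtain ⟨x, hx, hxt⟩ := exists_mem_eq_sup t.support
    (nonempty_of_ne_empty fun h0 => by simp [bval, h0] at h) fun x : Fin n => (x : ℕ)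
  rw [bval, Perm.support_conj]
  refine le_antisymm (Finset.sup_le fun y hy => ?_) ?_
  · obtain ⟨z, hz, rfl⟩ := mem_map.mp hy
    by_cases hzs : z ∈ s.support
    · exact (le_bval_of_mem_support (Perm.apply_mem_support.mpr hzs)).trans h.le
    · rw [Function.Embedding.coeFn_mk, Perm.notMem_support.mp hzs]
      exact le_bval_of_mem_support hz
  · have hsx : s x = x :=
      Perm.notMem_support.mp fun hs => (le_bval_of_mem_support hs).not_gt (hxt ▸ h)
    rw [bval, hxt, ← hsx]
    exact le_sup (f := fun x : Fin n => (x : ℕ)) (mem_map_of_mem _ hx)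

lemma bval_lt_of_isSwap {t : Perm (Fin n)} (ht : t.IsSwap) : bval t < n := by
  obtain ⟨a, -, -, -⟩ := ht
  exact (Finset.sup_lt_iff (Fin.pos a)).mpr fun x _ => x.isLt

open Classical in
noncomputable def swapsWithBval (n b : ℕ) : Finset (Perm (Fin n)) := {t | t.IsSwap ∧ bval t = b}

@[simp] lemma mem_swapsWithBval {b : ℕ} {t : Perm (Fin n)} :
    t ∈ swapsWithBval n b ↔ t.IsSwap ∧ bval t = b := by
  simp [swapsWithBval]

noncomputable def jucysMurphy (n b : ℕ) : MonoidAlgebra ℕ (Perm (Fin n)) :=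
  ∑ t ∈ swapsWithBval n b, MonoidAlgebra.single t 1

lemma conj_mem_swapsWithBval_iff {s : Perm (Fin n)} {b : ℕ} (hs : bval s < b)
    (t : Perm (Fin n)) : s * t * s⁻¹ ∈ swapsWithBval n b ↔ t ∈ swapsWithBval n b := by
  simp only [mem_swapsWithBval]
  constructor
  · rintro ⟨hswap, hbval⟩
    have ht : t = s⁻¹ * (s * t * s⁻¹) * s⁻¹⁻¹ := by group
    rw [ht, bval_conj_of_lt (by rwa [bval_inv, hbval])]
    exact ⟨hswap.conj _, hbval⟩
  · rintro ⟨hswap, rfl⟩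
    exact ⟨hswap.conj s, bval_conj_of_lt hs⟩

lemma jucysMurphy_commute_of_lt {x y : ℕ} (hxy : x < y) :
    Commute (jucysMurphy n x) (jucysMurphy n y) :=
  Commute.sum_left _ _ _ fun _ hs => commute_single_sum_single_of_conj_mem_iff
    (conj_mem_swapsWithBval_iff ((mem_swapsWithBval.mp hs).2 ▸ hxy))

lemma jucysMurphy_commute (n x y : ℕ) : Commute (jucysMurphy n x) (jucysMurphy n y) := by
  rcases lt_trichotomy x y with hxy | rfl | hxy
  · exact jucysMurphy_commute_of_lt hxy
  · exact Commute.refl _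
  · exact (jucysMurphy_commute_of_lt hxy).symm

noncomputable def pathCount {d : ℕ} (c : Perm (Fin n)) (w : Fin d → ℕ) : ℕ :=
  #{τ ∈ Fintype.piFinset fun m => swapsWithBval n (w m) | (List.ofFn τ).reverse.prod = c}

lemma pathCount_eq_coeff {d : ℕ} (c : Perm (Fin n)) (w : Fin d → ℕ) :
    pathCount c w = (List.ofFn fun m => jucysMurphy n (w m)).reverse.prod.coeff c :=
  (coeff_ofFn_sum_single_reverse_prod _ c).symm

lemma pathCount_comp_perm {d : ℕ} (c : Perm (Fin n)) (w : Fin d → ℕ) (σ : Perm (Fin d)) :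
    pathCount c (w ∘ σ) = pathCount c w := by
  rw [pathCount_eq_coeff, pathCount_eq_coeff]
  congr 2
  refine List.Perm.prod_eq' ?_ (List.pairwise_of_forall_mem_list fun x hx y hy => ?_)
  · exact (List.reverse_perm _).trans
      ((σ.ofFn_comp_perm fun m => jucysMurphy n (w m)).trans (List.reverse_perm _).symm)
  · obtain ⟨i, rfl⟩ := List.mem_ofFn.mp (List.mem_reverse.mp hx)
    obtain ⟨j, rfl⟩ := List.mem_ofFn.mp (List.mem_reverse.mp hy)
    exact jucysMurphy_commute n _ _

lemma natCard_eq_sum_pathCount {d : ℕ} (Q : (Fin d → ℕ) → Prop) [DecidablePred Q]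
    (c : Perm (Fin n)) :
    Nat.card {τ : Fin d → Perm (Fin n) //
        (∀ m, (τ m).IsSwap) ∧ Q (fun m => bval (τ m)) ∧ (List.ofFn τ).reverse.prod = c} =
      ∑ w ∈ Fintype.piFinset (fun _ => range n) with Q w, pathCount c w := by
  classical
  rw [Nat.card_eq_fintype_card, Fintype.card_subtype]
  refine (card_eq_sum_card_fiberwise (f := fun τ m => bval (τ m)) fun τ hτ => ?_).trans
    (sum_congr rfl fun w hw => congrArg card (ext fun τ => ?_))
  · simp only [coe_filter, Set.mem_ofPred_eq, mem_univ, true_and] at hτ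
    simp only [coe_filter, Fintype.mem_piFinset, mem_range, Set.mem_ofPred_eq]
    exact ⟨fun m => bval_lt_of_isSwap (hτ.1 m), hτ.2.1⟩
  · simp only [mem_filter, Fintype.mem_piFinset, mem_range, mem_univ, true_and] at hw ⊢
    simp only [mem_swapsWithBval]
    constructor
    · rintro ⟨⟨hswap, -, hc⟩, rfl⟩
      exact ⟨fun m => ⟨hswap m, rfl⟩, hc⟩
    · rintro ⟨hsb, hc⟩
      obtain rfl : (fun m => bval (τ m)) = w := funext fun m => (hsb m).2
      exact ⟨⟨fun m => (hsb m).1, hw.2, hc⟩, rfl⟩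

end Transpositions

theorem path_count_eq_multinomial_mul_monotone_count_general (n : ℕ) (d : ℕ)
    (lam : Nat.Partition d) (h g : Equiv.Perm (Fin n)) :
    (Nat.card {τ : Fin d → Equiv.Perm (Fin n) //
        (∀ m, (τ m).IsSwap) ∧
        signature τ = lam.parts ∧
        (List.ofFn τ).reverse.prod * h = g} : ℚ) =
      ((Nat.factorial d : ℚ) / ((lam.parts.map Nat.factorial).prod : ℚ)) *
        (Nat.card {τ : Fin d → Equiv.Perm (Fin n) //
          (∀ m, (τ m).IsSwap) ∧
          Monotone (fun m => bval (τ m)) ∧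
          signature τ = lam.parts ∧
          (List.ofFn τ).reverse.prod * h = g} : ℚ) := by
  classical
  have total := natCard_eq_sum_pathCount
    (fun w : Fin d → ℕ => wordSignature w = lam.parts) (g * h⁻¹)
  have mono := natCard_eq_sum_pathCount
    (fun w : Fin d → ℕ => Monotone w ∧ wordSignature w = lam.parts) (g * h⁻¹)
  simp only [eq_mul_inv_iff_mul_eq, ← signature_eq_wordSignature, and_assoc] at total mono
  set A := {w ∈ Fintype.piFinset (fun _ : Fin d => range n) | wordSignature w = lam.parts}
  have hA : ∀ w ∈ A, ∀ σ : Perm (Fin d), w ∘ σ ∈ A := fun w hw σ => by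
    simp only [A, mem_filter, Fintype.mem_piFinset, wordSignature_comp_perm] at hw ⊢
    exact ⟨fun m => hw.1 (σ m), hw.2⟩
  have key := sum_card_stabilizer_smul_eq A hA (pathCount (g * h⁻¹)) (pathCount_comp_perm _)
  rw [sum_congr rfl fun w hw => by rw [card_stabilizer_eq_prod_factorial, (mem_filter.mp hw).2],
    ← smul_sum, filter_filter, filter_congr fun w _ => and_comm, smul_eq_mul, smul_eq_mul] at key
  have factorials_ne_zero : ((lam.parts.map Nat.factorial).prod : ℚ) ≠ 0 := by
    simp [Multiset.prod_eq_zero_iff, Nat.factorial_ne_zero]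
  rw [total, mono, div_mul_eq_mul_div, eq_div_iff factorials_ne_zero]
  exact_mod_cast (mul_comm _ _).trans key

/-- for `n ≥ 1`, a partition `λ = (λ_1,…,λ_ℓ)` of `d` and `h, g ∈ S_n`, the total
number of sequences of transpositions `(τ_1,…,τ_d)` of signature `λ` with `τ_d ⋯ τ_1 h = g`
equals `d!/(λ_1! ⋯ λ_ℓ!)` times the number of weakly monotone such sequences. -/
theorem path_count_eq_multinomial_mul_monotone_count (n : ℕ) (hn : 1 ≤ n) (d : ℕ)
    (lam : Nat.Partition d) (h g : Equiv.Perm (Fin n)) :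
    (Nat.card {τ : Fin d → Equiv.Perm (Fin n) //
        (∀ m, (τ m).IsSwap) ∧
        signature τ = lam.parts ∧
        (List.ofFn τ).reverse.prod * h = g} : ℚ) =
      ((Nat.factorial d : ℚ) / ((lam.parts.map Nat.factorial).prod : ℚ)) *
        (Nat.card {τ : Fin d → Equiv.Perm (Fin n) //
          (∀ m, (τ m).IsSwap) ∧
          Monotone (fun m => bval (τ m)) ∧
          signature τ = lam.parts ∧
          (List.ofFn τ).reverse.prod * h = g} : ℚ) :=
  path_count_eq_multinomial_mul_monotone_count_general n d lam h g
end

section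
/- For every partition λ = (λ_1 ≥ ⋯ ≥ λ_ℓ > 0) of n, the determinant of the ℓ×ℓ matrix with entries 1/(λ_i − i + j)! (for 1 ≤ i, j ≤ ℓ, with the convention 1/m! := 0 when m < 0) equals Π_{(i,j) ∈ λ} 1/hook_λ(i,j); equivalently, the product h_λ of the hook lengths of λ satisfies h_λ = (det(1/(λ_i − i + j)!))^{-1}. -/
/-!
Write `ℓ` for the number of parts and `β_i = λ_i + (ℓ - 1 - i)` (rows indexed from `0`) for the
beta numbers, which strictly decrease. Since `λ_i - i + j = β_i - (ℓ - 1 - j)`, the entry in row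
`i` and column `j` is `(1 / β_i!) · β_i (β_i - 1) ⋯ (β_i - ℓ + 2 + j)`, a polynomial in `β_i` of
degree `ℓ - 1 - j`, monic and the same for every row; it vanishes exactly when
`λ_i - i + j < 0`, which matches the convention `1/m! = 0`. Pulling out the row factors leaves a
Vandermonde determinant, so the determinant is `∏_i (1 / β_i!) · ∏_{i < k} (β_i - β_k)`.

This matches the hook product row by row: the hook lengths in row `i` and the differences
`β_i - β_k` for `k > i` are `β_i` distinct numbers in `{1, …, β_i}`, so their product is `β_i!`.
-/

open Finset
open scoped Nat

theorem prod_mul_prod_eq_factorial {ι κ : Type*} {s : Finset ι} {t : Finset κ} {f : ι → ℕ}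
    {g : κ → ℕ} {m : ℕ} (hf : Set.InjOn f s) (hg : Set.InjOn g t)
    (hfg : ∀ x ∈ s, ∀ y ∈ t, f x ≠ g y) (hfm : ∀ x ∈ s, f x ∈ Icc 1 m)
    (hgm : ∀ y ∈ t, g y ∈ Icc 1 m) (hcard : #s + #t = m) :
    (∏ x ∈ s, f x) * ∏ y ∈ t, g y = m ! := by
  have hdisj : Disjoint (s.image f) (t.image g) := by
    simp only [disjoint_left, mem_image]
    rintro _ ⟨x, hx, rfl⟩ ⟨y, hy, hxy⟩
    exact hfg x hx y hy hxy.symm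
  have hunion : s.image f ∪ t.image g = Icc 1 m := by
    refine eq_of_subset_of_card_le (union_subset ?_ ?_) ?_
    · simpa [subset_iff] using hfm
    · simpa [subset_iff] using hgm
    · rw [card_union_of_disjoint hdisj, card_image_of_injOn hf, card_image_of_injOn hg,
        Nat.card_Icc, hcard, Nat.add_sub_cancel]
  calc (∏ x ∈ s, f x) * ∏ y ∈ t, g y = ∏ n ∈ s.image f ∪ t.image g, n := by
        rw [prod_union hdisj, prod_image hf, prod_image hg]
    _ = m ! := by rw [hunion, ← Ico_add_one_right_eq_Icc, prod_Ico_id_eq_factorial]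

theorem det_descPochhammer_eval_rev {R : Type*} [CommRing R] [IsDomain R] {n : ℕ}
    (v : Fin n → R) :
    (Matrix.of fun i j : Fin n => (descPochhammer R (n - 1 - j)).eval (v i)).det =
      ∏ i, ∏ j ∈ Ioi i, (v i - v j) := by
  have hrev : (Matrix.of fun i j : Fin n => (descPochhammer R (n - 1 - j)).eval (v i)) =
      (Matrix.of fun i j : Fin n => (descPochhammer R j).eval (v i)).submatrix id Fin.revPerm := by
    ext i j
    simp [Fin.val_rev, Nat.sub_sub, add_comm]
  have hproj : Matrix.projVandermonde 1 v =
      (Matrix.vandermonde v).submatrix id Fin.revPerm := by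
    ext i j
    simp [Matrix.projVandermonde_apply]
  rw [hrev, Matrix.det_permute', ← Matrix.det_eval_matrixOfPolynomials_eq_det_vandermonde v _
      (fun j => descPochhammer_natDegree R j) (fun j => monic_descPochhammer R j),
    ← Matrix.det_permute', ← hproj, Matrix.det_projVandermonde]
  simp

theorem one_div_factorial_sub_eq_mul_descFactorial {K : Type*} [Field K] [CharZero K]
    {m d : ℕ} (h : d ≤ m) : (1 : K) / (m - d)! = 1 / m ! * m.descFactorial d := by
  rw [← Nat.factorial_mul_descFactorial h]
  have : (m.descFactorial d : K) ≠ 0 := by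
    rw [Nat.cast_ne_zero, Ne, Nat.descFactorial_eq_zero_iff_lt]
    omega
  push_cast
  field_simp

theorem List.Pairwise.getD_le_getD {l : List ℕ} (hl : l.Pairwise (· ≥ ·)) {i k : ℕ}
    (hik : i ≤ k) (hk : k < l.length) : l.getD k 0 ≤ l.getD i 0 := by
  rw [l.getD_eq_getElem 0 hk, l.getD_eq_getElem 0 (hik.trans_lt hk)]
  exact hl.rel_get_of_le (a := ⟨i, hik.trans_lt hk⟩) (b := ⟨k, hk⟩) hik

theorem List.Pairwise.lt_countP_le_iff {l : List ℕ} (hl : l.Pairwise (· ≥ ·)) {c t : ℕ}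
    (ht : t < l.length) : t < l.countP (c ≤ ·) ↔ c ≤ l.getD t 0 := by
  induction l generalizing t with
  | nil => simp at ht
  | cons a l ih =>
    rw [List.pairwise_cons] at hl
    by_cases hca : c ≤ a
    · cases t with
      | zero => simp [hca]
      | succ t => simpa [hca] using ih hl.2 (by simpa using ht)
    · have hzero : l.countP (c ≤ ·) = 0 :=
        List.countP_eq_zero.mpr fun x hx => by simpa using (hl.1 x hx).trans_lt (not_le.mp hca)
      cases t with
      | zero => simp [hca, hzero]
      | succ t =>
        have ht' : t < l.length := by simpa using ht
        have := hl.1 _ (List.getElem_mem ht')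
        rw [List.getD_cons_succ, l.getD_eq_getElem 0 ht']
        simp only [List.countP_cons, hzero, hca, decide_false, Bool.false_eq_true, if_false]
        omega

/-- For a partition with positive parts, `betaNumber l k` is the hook length of the first cell
of row `k` (rows indexed from `0`). -/
def betaNumber (l : List ℕ) (k : ℕ) : ℕ := l.getD k 0 + (l.length - 1 - k)

/-- Rows `i` and columns `j` are indexed from `0`; `l.countP (j + 1 ≤ ·)` is the conjugate
part `λ'_{j+1}`. -/
def hookLength (l : List ℕ) (i j : ℕ) : ℕ :=
  (l.getD i 0 - (j + 1)) + (l.countP (j + 1 ≤ ·) - (i + 1)) + 1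

section SortedParts

variable {l : List ℕ}

theorem betaNumber_strictAntiOn (hl : l.Pairwise (· ≥ ·)) :
    StrictAntiOn (betaNumber l) (Set.Iio l.length) := by
  intro i _ k hk hik
  rw [Set.mem_Iio] at hk
  have := hl.getD_le_getD hik.le hk
  unfold betaNumber
  omega

theorem hookLength_le_betaNumber {i j : ℕ} (hi : i < l.length) (hj : j < l.getD i 0) :
    hookLength l i j ≤ betaNumber l i := by
  have : l.countP (j + 1 ≤ ·) ≤ l.length := List.countP_le_length
  unfold hookLength betaNumber
  omega

theorem hookLength_strictAntiOn (hl : l.Pairwise (· ≥ ·)) {i : ℕ} (hi : i < l.length) :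
    StrictAntiOn (hookLength l i) (range (l.getD i 0)) := by
  intro j _ j' hj' hjj'
  simp only [coe_range, Set.mem_Iio] at hj'
  have hcount : l.countP (j' + 1 ≤ ·) ≤ l.countP (j + 1 ≤ ·) :=
    List.countP_mono_left fun x _ hx => by simp only [decide_eq_true_eq] at *; omega
  have := (hl.lt_countP_le_iff (c := j' + 1) hi).mpr hj'
  unfold hookLength
  omega

theorem hookLength_ne_betaNumber_sub (hl : l.Pairwise (· ≥ ·)) {i j k : ℕ}
    (hj : j < l.getD i 0) (hik : i < k) (hk : k < l.length) :
    hookLength l i j ≠ betaNumber l i - betaNumber l k := by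
  have hi : i < l.length := hik.trans hk
  have hcell := (hl.lt_countP_le_iff (c := j + 1) hi).mpr hj
  have hbeta := betaNumber_strictAntiOn hl hi hk hik
  have hcol := hl.lt_countP_le_iff (c := j + 1) hk
  unfold hookLength betaNumber at *
  by_cases hjk : j + 1 ≤ l.getD k 0 <;>
    simp only [hjk, iff_true, iff_false, not_lt] at hcol <;> omega

theorem prod_hookLength_mul_prod_sub_betaNumber (hl : l.Pairwise (· ≥ ·)) {i : ℕ}
    (hi : i < l.length) :
    (∏ j ∈ range (l.getD i 0), hookLength l i j) *
      ∏ k ∈ Ioo i l.length, (betaNumber l i - betaNumber l k) = (betaNumber l i)! := by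
  refine prod_mul_prod_eq_factorial (hookLength_strictAntiOn hl hi).injOn ?_
    (fun j hj k hk => hookLength_ne_betaNumber_sub hl (mem_range.mp hj) (mem_Ioo.mp hk).1
      (mem_Ioo.mp hk).2) ?_ ?_ ?_
  · intro k hk k' hk' hkk'
    simp only [coe_Ioo, Set.mem_Ioo] at hk hk'
    have := betaNumber_strictAntiOn hl hi hk.2 hk.1
    have := betaNumber_strictAntiOn hl hi hk'.2 hk'.1
    exact (betaNumber_strictAntiOn hl).injOn hk.2 hk'.2 (by simp only at hkk'; omega)
  · intro j hj
    have := hookLength_le_betaNumber hi (mem_range.mp hj)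
    simp only [mem_Icc]
    exact ⟨by unfold hookLength; omega, this⟩
  · intro k hk
    have := betaNumber_strictAntiOn hl hi (mem_Ioo.mp hk).2 (mem_Ioo.mp hk).1
    simp only [mem_Icc]
    omega
  · rw [card_range, Nat.card_Ioo]
    unfold betaNumber
    omega

theorem prod_one_div_hookLength (hl : l.Pairwise (· ≥ ·)) {i : ℕ} (hi : i < l.length) :
    ∏ j ∈ range (l.getD i 0), (1 : ℚ) / hookLength l i j =
      1 / (betaNumber l i)! * ∏ k ∈ Ioo i l.length, ((betaNumber l i : ℚ) - betaNumber l k) := by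
  have hdiff : ∀ k ∈ Ioo i l.length, betaNumber l k ≤ betaNumber l i := fun k hk =>
    (betaNumber_strictAntiOn hl hi (mem_Ioo.mp hk).2 (mem_Ioo.mp hk).1).le
  have hfactorial : (∏ j ∈ range (l.getD i 0), (hookLength l i j : ℚ)) *
      ∏ k ∈ Ioo i l.length, ((betaNumber l i : ℚ) - betaNumber l k) = (betaNumber l i)! := by
    rw [← prod_congr rfl fun k hk => Nat.cast_sub (R := ℚ) (hdiff k hk), ← Nat.cast_prod,
      ← Nat.cast_prod, ← Nat.cast_mul, prod_hookLength_mul_prod_sub_betaNumber hl hi]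
  have hne : ((betaNumber l i)! : ℚ) ≠ 0 := Nat.cast_ne_zero.mpr (Nat.factorial_ne_zero _)
  rw [← hfactorial] at hne ⊢
  rw [prod_div_distrib, prod_const_one]
  field_simp [left_ne_zero_of_mul hne, right_ne_zero_of_mul hne]

theorem cast_hookLength {R : Type*} [Ring R] (hl : l.Pairwise (· ≥ ·)) {i j : ℕ}
    (hi : i < l.length) (hj : j < l.getD i 0) :
    (hookLength l i j : R) =
      (l.getD i 0 : R) - ((j : R) + 1) + (l.countP (j + 1 ≤ ·) : R) - ((i : R) + 1) + 1 := by
  have := (hl.lt_countP_le_iff (c := j + 1) hi).mpr hj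
  rw [hookLength, Nat.cast_add, Nat.cast_add, Nat.cast_sub (by omega), Nat.cast_sub (by omega)]
  push_cast
  abel

end SortedParts

theorem det_one_div_factorial_eq_prod_mul_prod_sub_betaNumber (l : List ℕ) :
    (Matrix.det fun i j : Fin l.length =>
        if (0 : ℤ) ≤ (l.getD i 0 : ℤ) - (i : ℤ) + (j : ℤ) then
          (1 : ℚ) / ((l.getD i 0 : ℤ) - (i : ℤ) + (j : ℤ)).toNat !
        else 0) =
      (∏ i : Fin l.length, (1 : ℚ) / (betaNumber l i)!) *
        ∏ i : Fin l.length, ∏ k ∈ Ioi i, ((betaNumber l i : ℚ) - betaNumber l k) := by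
  have hentry : ∀ i j : Fin l.length,
      (if (0 : ℤ) ≤ (l.getD i 0 : ℤ) - (i : ℤ) + (j : ℤ) then
          (1 : ℚ) / ((l.getD i 0 : ℤ) - (i : ℤ) + (j : ℤ)).toNat !
        else 0) =
        1 / (betaNumber l i)! *
          (descPochhammer ℚ (l.length - 1 - j)).eval (betaNumber l i : ℚ) := by
    intro i j
    rw [descPochhammer_eval_eq_descFactorial]
    have hshift : (l.getD i 0 : ℤ) - i + j = betaNumber l i - (l.length - 1 - j : ℕ) := by
      unfold betaNumber; omega
    split_ifs with h
    · rw [hshift, ← Nat.cast_sub (by omega), Int.toNat_natCast,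
        one_div_factorial_sub_eq_mul_descFactorial (by omega)]
    · rw [Nat.descFactorial_eq_zero_iff_lt.mpr (by omega), Nat.cast_zero, mul_zero]
  simp_rw [hentry]
  exact (Matrix.det_mul_column (fun i : Fin l.length => 1 / ((betaNumber l i)! : ℚ)) _).trans
    (congrArg _ (det_descPochhammer_eval_rev fun i : Fin l.length => (betaNumber l i : ℚ)))

theorem det_inv_factorial_eq_prod_inv_hooks_general (l : List ℕ)
    (hsorted : l.Pairwise (· ≥ ·)) :
    (Matrix.det fun i j : Fin l.length =>
        if hm : (0 : ℤ) ≤ (l.getD i 0 : ℤ) - (i : ℤ) + (j : ℤ) then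
          (1 : ℚ) / (Nat.factorial ((l.getD i 0 : ℤ) - (i : ℤ) + (j : ℤ)).toNat : ℚ)
        else 0) =
      ∏ i ∈ Finset.range l.length, ∏ j ∈ Finset.range (l.getD i 0),
        (1 : ℚ) / ((l.getD i 0 : ℚ) - ((j : ℚ) + 1) +
          (l.countP (fun x => decide (j + 1 ≤ x)) : ℚ) - ((i : ℚ) + 1) + 1) := by
  have hrow : ∀ i : Fin l.length,
      ∏ j ∈ range (l.getD i 0), (1 : ℚ) / ((l.getD i 0 : ℚ) - ((j : ℚ) + 1) +
          (l.countP (fun x => decide (j + 1 ≤ x)) : ℚ) - ((i : ℚ) + 1) + 1) =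
        1 / (betaNumber l i)! * ∏ k ∈ Ioi i, ((betaNumber l i : ℚ) - betaNumber l k) := by
    intro i
    have hrowIoo := prod_one_div_hookLength hsorted i.isLt
    rw [← Fin.map_valEmbedding_Ioi, prod_map] at hrowIoo
    refine (prod_congr rfl fun j hj => ?_).trans hrowIoo
    rw [cast_hookLength hsorted i.isLt (mem_range.mp hj)]
  simp only [dite_eq_ite]
  rw [det_one_div_factorial_eq_prod_mul_prod_sub_betaNumber, ← prod_mul_distrib, prod_range]
  exact prod_congr rfl fun i _ => (hrow i).symm

/-- for a partition `λ = (λ_1 ≥ ⋯ ≥ λ_ℓ > 0)` of `n` (given as the list `l` of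
its parts), `det(1/(λ_i − i + j)!) = Π_{(i,j) ∈ λ} 1/hook_λ(i,j)`, where the matrix is
`ℓ×ℓ` with the convention `1/m! = 0` for `m < 0`, and
`hook_λ(i,j) = λ_i − j + λ'_j − i + 1` with `λ'` the conjugate partition
(`λ'_j = #{i : λ_i ≥ j}`).  Rows/columns of the matrix and cells are indexed below from `0`,
so the matrix entry at `(i₀,j₀)` is `1/(λ_{i₀+1} − (i₀+1) + (j₀+1))! = 1/(λ_{i₀+1} − i₀ + j₀)!`. -/
theorem det_inv_factorial_eq_prod_inv_hooks (n : ℕ) (l : List ℕ)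
    (hsorted : l.Pairwise (· ≥ ·)) (hpos : ∀ x ∈ l, 0 < x) (hsum : l.sum = n) :
    (Matrix.det fun i j : Fin l.length =>
        if hm : (0 : ℤ) ≤ (l.getD i 0 : ℤ) - (i : ℤ) + (j : ℤ) then
          (1 : ℚ) / (Nat.factorial ((l.getD i 0 : ℤ) - (i : ℤ) + (j : ℤ)).toNat : ℚ)
        else 0) =
      ∏ i ∈ Finset.range l.length, ∏ j ∈ Finset.range (l.getD i 0),
        (1 : ℚ) / ((l.getD i 0 : ℚ) - ((j : ℚ) + 1) +
          (l.countP (fun x => decide (j + 1 ≤ x)) : ℚ) - ((i : ℚ) + 1) + 1) :=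
  det_inv_factorial_eq_prod_inv_hooks_general l hsorted
end

section
/- For all complex numbers q and z with |q| < 1, the convergent infinite product Π_{i=1}^∞ (1 + q^i z) has the expansion Π_{i=1}^∞ (1 + q^i z) = 1 + Σ_{i=1}^∞ E'_i(q) z^i with coefficients E'_i(q) = q^{i(i+1)/2} / Π_{j=1}^i (1 − q^j), the series on the right converging absolutely for every z ∈ ℂ. -/
/-!
Both `F(z) = ∏ (1 + q^(i+1) z)` and `G(z) = ∑ E'_k(q) z^k` satisfy `F(z) = (1 + q z) F(q z)`:
the product by splitting off its first factor, the series because the coefficients obey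
`(1 - q^(k+1)) E'_(k+1) = q^(k+1) E'_k`. Both tend to `1` at `0`, so iterating gives
`F(z) - G(z) = ∏_(i<n) (1 + q^(i+1) z) · (F - G)(q^n z) → 0`.
-/

open Filter Finset Topology

/-- `E'_k(q)`, indexed from `k = 0`, where it is the constant term `1` of the expansion. -/
noncomputable def qExpCoeff (q : ℂ) (k : ℕ) : ℂ :=
  q ^ (k * (k + 1) / 2) / ∏ j ∈ range k, (1 - q ^ (j + 1))

noncomputable def qExpSeries (q z : ℂ) : ℂ :=
  ∑' k, qExpCoeff q k * z ^ k

noncomputable def qExpProd (q z : ℂ) : ℂ :=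
  ∏' i : ℕ, (1 + q ^ (i + 1) * z)

lemma one_sub_pow_ne_zero_of_norm_lt_one {R : Type*} [NormedRing R] [NormOneClass R] {q : R}
    (hq : ‖q‖ < 1) {n : ℕ} (hn : n ≠ 0) : 1 - q ^ n ≠ 0 := by
  refine sub_ne_zero.2 fun h => (norm_pow_le' q (Nat.pos_of_ne_zero hn)).not_gt ?_
  rw [← h, norm_one]
  exact pow_lt_one₀ (norm_nonneg q) hq hn

lemma qExpCoeff_zero (q : ℂ) : qExpCoeff q 0 = 1 := by
  simp [qExpCoeff]

/-- No hypothesis on `q` is needed: if `1 - q^(k+1) = 0` both sides vanish, as `x / 0 = 0`. -/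
lemma qExpCoeff_succ (q : ℂ) (k : ℕ) :
    qExpCoeff q (k + 1) = q ^ (k + 1) / (1 - q ^ (k + 1)) * qExpCoeff q k := by
  have htriangle : (k + 1) * (k + 1 + 1) / 2 = k * (k + 1) / 2 + (k + 1) := by
    rw [show (k + 1) * (k + 1 + 1) = k * (k + 1) + 2 * (k + 1) by ring,
      Nat.add_mul_div_left _ _ two_pos]
  rw [qExpCoeff, qExpCoeff, htriangle, pow_add, prod_range_succ, div_mul_div_comm,
    mul_comm (q ^ (k + 1)), mul_comm (1 - q ^ (k + 1))]

lemma one_sub_pow_mul_qExpCoeff_succ {q : ℂ} (hq : ‖q‖ < 1) (k : ℕ) :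
    (1 - q ^ (k + 1)) * qExpCoeff q (k + 1) = q ^ (k + 1) * qExpCoeff q k := by
  rw [qExpCoeff_succ, ← mul_assoc,
    mul_div_cancel₀ _ (one_sub_pow_ne_zero_of_norm_lt_one hq k.succ_ne_zero)]

lemma summable_norm_qExpCoeff_mul_pow {q : ℂ} (hq : ‖q‖ < 1) (z : ℂ) :
    Summable fun k => ‖qExpCoeff q k * z ^ k‖ := by
  have hpow : Tendsto (fun k : ℕ => q ^ (k + 1)) atTop (𝓝 0) :=
    (tendsto_pow_atTop_nhds_zero_of_norm_lt_one hq).comp (tendsto_add_atTop_nat 1)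
  have hratio : Tendsto (fun k : ℕ => q ^ (k + 1) / (1 - q ^ (k + 1)) * z) atTop (𝓝 0) := by
    simpa using (hpow.div (tendsto_const_nhds.sub hpow) (by simp)).mul_const z
  refine summable_of_ratio_norm_eventually_le (r := 1 / 2) (by norm_num) ?_
  filter_upwards [hratio.norm.eventually (ge_mem_nhds (by norm_num : ‖(0 : ℂ)‖ < 1 / 2))]
    with k hk
  rw [norm_norm, norm_norm, qExpCoeff_succ,
    show q ^ (k + 1) / (1 - q ^ (k + 1)) * qExpCoeff q k * z ^ (k + 1)
      = q ^ (k + 1) / (1 - q ^ (k + 1)) * z * (qExpCoeff q k * z ^ k) by ring, norm_mul]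
  exact mul_le_mul_of_nonneg_right hk (norm_nonneg _)

lemma summable_norm_pow_succ_mul {q : ℂ} (hq : ‖q‖ < 1) (z : ℂ) :
    Summable fun i : ℕ => ‖q ^ (i + 1) * z‖ := by
  simpa only [norm_mul, norm_pow, pow_succ, mul_assoc] using
    (summable_geometric_of_lt_one (norm_nonneg q) hq).mul_right (‖q‖ * ‖z‖)

lemma multipliable_one_add_pow_succ_mul {q : ℂ} (hq : ‖q‖ < 1) (z : ℂ) :
    Multipliable fun i : ℕ => 1 + q ^ (i + 1) * z :=
  multipliable_one_add_of_summable (summable_norm_pow_succ_mul hq z)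

lemma qExpProd_eq_mul {q : ℂ} (hq : ‖q‖ < 1) (z : ℂ) :
    qExpProd q z = (1 + q * z) * qExpProd q (q * z) := by
  have hshift (i : ℕ) : 1 + q ^ (i + 1 + 1) * z = 1 + q ^ (i + 1) * (q * z) := by ring
  rw [qExpProd, qExpProd, tprod_eq_zero_mul' (f := fun i : ℕ => 1 + q ^ (i + 1) * z)]
  · simp only [hshift, zero_add, pow_one]
  · simpa only [hshift] using multipliable_one_add_pow_succ_mul hq (q * z)

lemma qExpSeries_eq_mul {q : ℂ} (hq : ‖q‖ < 1) (z : ℂ) :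
    qExpSeries q z = (1 + q * z) * qExpSeries q (q * z) := by
  have hz := (summable_norm_qExpCoeff_mul_pow hq z).of_norm
  have hqz := (summable_norm_qExpCoeff_mul_pow hq (q * z)).of_norm
  have hterm (k : ℕ) : qExpCoeff q (k + 1) * z ^ (k + 1)
      = qExpCoeff q (k + 1) * (q * z) ^ (k + 1) + q * z * (qExpCoeff q k * (q * z) ^ k) := by
    linear_combination z ^ (k + 1) * one_sub_pow_mul_qExpCoeff_succ hq k
  calc qExpSeries q z = 1 + ∑' k, qExpCoeff q (k + 1) * z ^ (k + 1) := by
        rw [qExpSeries, hz.tsum_eq_zero_add, qExpCoeff_zero, pow_zero, one_mul]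
    _ = 1 + ∑' k, qExpCoeff q (k + 1) * (q * z) ^ (k + 1) + q * z * qExpSeries q (q * z) := by
        rw [tsum_congr hterm, ((summable_nat_add_iff 1).2 hqz).tsum_add (hqz.mul_left _),
          tsum_mul_left, qExpSeries, add_assoc]
    _ = (1 + q * z) * qExpSeries q (q * z) := by
        rw [qExpSeries, hqz.tsum_eq_zero_add, qExpCoeff_zero, pow_zero, one_mul]
        ring

lemma tendsto_qExpProd_zero {q : ℂ} (hq : ‖q‖ < 1) : Tendsto (qExpProd q) (𝓝 0) (𝓝 1) := by
  have hbound : Summable fun i : ℕ => ‖q ^ (i + 1)‖ := by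
    simpa using summable_norm_pow_succ_mul hq 1
  have h := tendsto_tprod_one_add_of_dominated_convergence
    (f := fun w i => q ^ (i + 1) * w) (g := fun _ => (0 : ℂ)) hbound
    (fun i => by simpa using (tendsto_id (x := 𝓝 (0 : ℂ))).const_mul (q ^ (i + 1)))
    (by
      filter_upwards [Metric.closedBall_mem_nhds (0 : ℂ) one_pos] with w hw i
      rw [norm_mul]
      exact mul_le_of_le_one_right (norm_nonneg _) (mem_closedBall_zero_iff.1 hw))
  simp only [add_zero, tprod_one] at h
  exact h

lemma tendsto_qExpSeries_zero {q : ℂ} (hq : ‖q‖ < 1) : Tendsto (qExpSeries q) (𝓝 0) (𝓝 1) := by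
  have hbound : Summable fun k => ‖qExpCoeff q k‖ := by
    simpa using summable_norm_qExpCoeff_mul_pow hq 1
  have := tendsto_tsum_of_dominated_convergence (f := fun w k => qExpCoeff q k * w ^ k)
    (g := fun k => qExpCoeff q k * 0 ^ k) hbound
    (fun k => (continuous_const.mul (continuous_pow k)).tendsto 0)
    (by
      filter_upwards [Metric.closedBall_mem_nhds (0 : ℂ) one_pos] with w hw k
      rw [norm_mul, norm_pow]
      exact mul_le_of_le_one_right (norm_nonneg _)
        (pow_le_one₀ (norm_nonneg w) (mem_closedBall_zero_iff.1 hw)))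
  rwa [tsum_eq_single 0 (fun k hk => by simp [hk]), pow_zero, mul_one, qExpCoeff_zero] at this

lemma eq_of_tendsto_nhds_zero_of_functional_eq {q : ℂ} (hq : ‖q‖ < 1) {f g : ℂ → ℂ} {c : ℂ}
    (hf : ∀ z, f z = (1 + q * z) * f (q * z)) (hg : ∀ z, g z = (1 + q * z) * g (q * z))
    (hf0 : Tendsto f (𝓝 0) (𝓝 c)) (hg0 : Tendsto g (𝓝 0) (𝓝 c)) (z : ℂ) : f z = g z := by
  have hiter (n : ℕ) : f z - g z
      = (∏ i ∈ range n, (1 + q ^ (i + 1) * z)) * (f (q ^ n * z) - g (q ^ n * z)) := by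
    induction n with
    | zero => simp
    | succ n ih =>
      have hshift : q * (q ^ n * z) = q ^ (n + 1) * z := by ring
      rw [ih, hf, hg, hshift, prod_range_succ]
      ring
  have hscale : Tendsto (fun n : ℕ => q ^ n * z) atTop (𝓝 0) := by
    simpa using (tendsto_pow_atTop_nhds_zero_of_norm_lt_one hq).mul_const z
  have hlim := (multipliable_one_add_pow_succ_mul hq z).hasProd.tendsto_prod_nat.mul
    ((hf0.sub hg0).comp hscale)
  rw [sub_self, mul_zero] at hlim
  exact sub_eq_zero.1 (tendsto_nhds_unique (tendsto_const_nhds.congr hiter) hlim)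

/-- for `|q| < 1` and any `z ∈ ℂ`, the convergent infinite product
`E'(q,z) = Π_{i=1}^∞ (1 + q^i z)` has the expansion `1 + Σ_{i=1}^∞ E'_i(q) z^i` with
`E'_i(q) = q^{i(i+1)/2}/Π_{j=1}^i (1 − q^j)`, the series converging absolutely for every
`z` (the product is indexed below by `i = i₀ + 1` and the series by `i = i₀ + 1`,
`i₀ ∈ ℕ`, and `j = j₀ + 1` in the denominator product). -/
theorem qExp_expansion (q : ℂ) (hq : ‖q‖ < 1) (z : ℂ) :
    Multipliable (fun i : ℕ => 1 + q ^ (i + 1) * z) ∧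
    Summable (fun i : ℕ =>
      ‖(q ^ ((i + 1) * (i + 2) / 2) / ∏ j ∈ Finset.range (i + 1), (1 - q ^ (j + 1))) *
        z ^ (i + 1)‖) ∧
    (∏' i : ℕ, (1 + q ^ (i + 1) * z)) =
      1 + ∑' i : ℕ,
        (q ^ ((i + 1) * (i + 2) / 2) / ∏ j ∈ Finset.range (i + 1), (1 - q ^ (j + 1))) *
          z ^ (i + 1) := by
  have hsummable := summable_norm_qExpCoeff_mul_pow hq z
  refine ⟨multipliable_one_add_pow_succ_mul hq z, (summable_nat_add_iff 1).2 hsummable, ?_⟩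
  have hexpansion : qExpProd q z = qExpSeries q z :=
    eq_of_tendsto_nhds_zero_of_functional_eq hq (qExpProd_eq_mul hq) (qExpSeries_eq_mul hq)
      (tendsto_qExpProd_zero hq) (tendsto_qExpSeries_zero hq) z
  rw [qExpProd, qExpSeries, hsummable.of_norm.tsum_eq_zero_add, qExpCoeff_zero, pow_zero,
    one_mul] at hexpansion
  exact hexpansion
end
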